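/- Let (J,t,t′) and (J̃,t̃,t̃′) be two parameter triples, with J, J̃ ∈ ℕ and t, t′, t̃, t̃′ ∈ ℝ, and let supp_D(J,t,t′) and supp_D(J̃,t̃,t̃′) be the corresponding compression supports built from the same data (n, r, σ, d̃, a, D). Assume J ≤ J̃, t ≤ t̃, t′ ≤ t̃′, r/2 < t, r/2 < t′, σ − n/2 > max{t̃, t̃′} − r/2, and d̃ > σ − n/2 − r/2. Then supp_D(J,t,t′) ⊆ supp_D(J̃,t̃,t̃′). -/

import Mathlib

/-- The compression threshold
`τ_{jj'} = a · max{2^{−min(j,j')}, 2^{(J(t+t'−r) − jt' − j't − (j+j')d̃)/(2d̃+r)}}`. -/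
noncomputable def tauThresh (r t t' dtil a : ℝ) (J j j' : ℕ) : ℝ :=
  a * max ((2 : ℝ) ^ (-((min j j' : ℕ) : ℝ)))
      ((2 : ℝ) ^ (((J : ℝ) * (t + t' - r) - (j : ℝ) * t' - (j' : ℝ) * t
        - ((j : ℝ) + (j' : ℝ)) * dtil) / (2 * dtil + r)))

/-- The compression support `supp_D(J,t,t')`: pairs of indices `((j,k),(j',k'))`
with scales at most `J`, distance `D` at most the threshold `τ_{jj'}`, and
satisfying the two slope conditions. -/
noncomputable def suppD {K : Type*} (n r σ dtil a : ℝ) (D : ℕ × K → ℕ × K → ℝ)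
    (J : ℕ) (t t' : ℝ) : Set ((ℕ × K) × (ℕ × K)) :=
  {p | p.1.1 ≤ J ∧ p.2.1 ≤ J ∧
    D p.1 p.2 ≤ tauThresh r t t' dtil a J p.1.1 p.2.1 ∧
    (p.1.1 : ℝ) ≤ ((t + t' - r) * J + (σ - n / 2 - (t - r / 2)) * p.2.1)
        / (σ - n / 2 + t' - r / 2) ∧
    (p.2.1 : ℝ) ≤ ((t + t' - r) * J + (σ - n / 2 - (t' - r / 2)) * p.1.1)
        / (σ - n / 2 + t - r / 2)}

/-
The threshold exponent and both slope bounds are increasing in `(J, t, t')`. For the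
exponent the numerator grows by `(J̃ - J)(t + t' - r) + (J̃ - j)(t̃' - t') + (J̃ - j')(t̃ - t)`.
A slope bound is the weighted mean `x + A/(A+B) · (J - x)` of the scale `x ≤ J` of the other
index and `J`, with `A = t + t' - r > 0` and `B = σ - n/2 - (t - r/2) > 0`; enlarging the
parameters increases `A`, decreases `B` and increases `J`, so the mean can only grow.
-/

lemma tauThresh_mono {r t t' tt tt' dtil a : ℝ} {J Jt j j' : ℕ} (ha : 0 ≤ a)
    (hdr : 0 < 2 * dtil + r) (hj : j ≤ J) (hj' : j' ≤ J) (hJ : J ≤ Jt)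
    (ht : t ≤ tt) (ht' : t' ≤ tt') (hr : r ≤ t + t') :
    tauThresh r t t' dtil a J j j' ≤ tauThresh r tt tt' dtil a Jt j j' := by
  have hjR : (j : ℝ) ≤ Jt := by exact_mod_cast hj.trans hJ
  have hj'R : (j' : ℝ) ≤ Jt := by exact_mod_cast hj'.trans hJ
  have hJR : (J : ℝ) ≤ Jt := by exact_mod_cast hJ
  unfold tauThresh
  gcongr a * max _ ((2 : ℝ) ^ (?_ / _))
  · norm_num
  · nlinarith [mul_nonneg (sub_nonneg.2 hJR) (sub_nonneg.2 hr),
      mul_nonneg (sub_nonneg.2 hjR) (sub_nonneg.2 ht'),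
      mul_nonneg (sub_nonneg.2 hj'R) (sub_nonneg.2 ht)]

lemma div_add_le_div_add {A B A' B' : ℝ} (hA : 0 < A) (hB' : 0 < B')
    (hAA' : A ≤ A') (hB'B : B' ≤ B) : A / (A + B) ≤ A' / (A' + B') := by
  rw [div_le_div_iff₀ (by linarith) (by linarith)]
  nlinarith [mul_le_mul hAA' hB'B hB'.le (hA.le.trans hAA')]

lemma weighted_mean_mono {A B A' B' x y y' : ℝ} (hA : 0 < A) (hB' : 0 < B')
    (hAA' : A ≤ A') (hB'B : B' ≤ B) (hxy : x ≤ y) (hyy' : y ≤ y') :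
    (A * y + B * x) / (A + B) ≤ (A' * y' + B' * x) / (A' + B') := by
  have mean_eq : ∀ {A B y : ℝ}, A + B ≠ 0 →
      (A * y + B * x) / (A + B) = x + A / (A + B) * (y - x) := by
    intro A B y h
    field_simp
    ring
  rw [mean_eq (by linarith), mean_eq (by linarith)]
  gcongr x + ?_ * ?_
  · exact div_nonneg (hA.le.trans hAA') (by linarith)
  · exact div_add_le_div_add hA hB' hAA' hB'B
  · linarith

lemma slope_bound_mono {c r s s' ss ss' x y y' : ℝ} (hs : r / 2 < s) (hs' : r / 2 < s')
    (hss : s ≤ ss) (hss' : s' ≤ ss') (hc : ss < c + r / 2) (hxy : x ≤ y) (hyy' : y ≤ y') :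
    ((s + s' - r) * y + (c - (s - r / 2)) * x) / (c + s' - r / 2) ≤
      ((ss + ss' - r) * y' + (c - (ss - r / 2)) * x) / (c + ss' - r / 2) := by
  have h := weighted_mean_mono (A := s + s' - r) (B := c - (s - r / 2))
    (A' := ss + ss' - r) (B' := c - (ss - r / 2)) (by linarith) (by linarith)
    (by linarith) (by linarith) hxy hyy'
  convert h using 2 <;> ring

theorem supp_monotonicity {K : Type*}
    (n r σ dtil a : ℝ) (ha : 0 < a) (hdr : 0 < 2 * dtil + r)
    (D : ℕ × K → ℕ × K → ℝ)
    (J Jt : ℕ) (t t' tt tt' : ℝ)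
    (hJ : J ≤ Jt) (ht : t ≤ tt) (ht' : t' ≤ tt')
    (h1 : r / 2 < t) (h2 : r / 2 < t')
    (h3 : σ - n / 2 > max tt tt' - r / 2) :
    suppD n r σ dtil a D J t t' ⊆ suppD n r σ dtil a D Jt tt tt' := by
  rintro ⟨⟨j, k⟩, ⟨j', k'⟩⟩ ⟨hj, hj', hD, hs1, hs2⟩
  obtain ⟨htt, htt'⟩ := max_lt_iff.1 (by linarith : max tt tt' < σ - n / 2 + r / 2)
  have hjR : (j : ℝ) ≤ J := by exact_mod_cast hj
  have hj'R : (j' : ℝ) ≤ J := by exact_mod_cast hj'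
  have hJR : (J : ℝ) ≤ Jt := by exact_mod_cast hJ
  refine ⟨hj.trans hJ, hj'.trans hJ,
    hD.trans (tauThresh_mono ha.le hdr hj hj' hJ ht ht' (by linarith)),
    hs1.trans (slope_bound_mono h1 h2 ht ht' htt hj'R hJR), hs2.trans ?_⟩
  simpa only [add_comm t' t, add_comm tt' tt] using
    slope_bound_mono h2 h1 ht' ht htt' hjR hJR
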